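/- For nondegenerate real-valued random variables X and Y with granularities γ(X) = P(X = X' = X'') and γ(Y) defined analogously, the symmetry AGC(X,Y) = AGC(Y,X) holds if and only if γ(X) = γ(Y), provided AGC(X,Y) ≠ 0; in general AGC(X,Y) = cor(F̄(X), Ḡ(Y)) · ((1 − γ(X))/(1 − γ(Y)))^(1/2). -/

import Mathlib

open MeasureTheory ProbabilityTheory

noncomputable section

variable {Ω : Type*} [MeasurableSpace Ω]

/-- Mid distribution function of `X` under `μ`: `F̄(x) = P(X < x) + (1/2) P(X = x)`. -/
def mdf (μ : Measure Ω) (X : Ω → ℝ) (x : ℝ) : ℝ :=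
  (μ {ω | X ω < x}).toReal + (1 / 2) * (μ {ω | X ω = x}).toReal

/-- Covariance of two real random variables under `μ`. -/
def covar (μ : Measure Ω) (f g : Ω → ℝ) : ℝ :=
  (∫ ω, f ω * g ω ∂μ) - (∫ ω, f ω ∂μ) * (∫ ω, g ω ∂μ)

/-- Similarity function `s(a,b) = 1{a < b} + (1/2) 1{a = b}`. -/
def simFun (a b : ℝ) : ℝ :=
  (if a < b then 1 else 0) + (1 / 2) * (if a = b then 1 else 0)

/-- Granularity `γ(X) = P(X = X' = X'')` for i.i.d. copies of `X`. -/
def gran (μ : Measure Ω) (X : Ω → ℝ) : ℝ :=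
  ((μ.prod (μ.prod μ)) {ω | X ω.1 = X ω.2.1 ∧ X ω.2.1 = X ω.2.2}).toReal

/-- Asymmetric grade correlation `AGC(U,V) = Cov(F̄_U(U), Ḡ_V(V)) / Var(Ḡ_V(V))`. -/
def agc (μ : Measure Ω) (U V : Ω → ℝ) : ℝ :=
  covar μ (fun ω => mdf μ U (U ω)) (fun ω => mdf μ V (V ω)) /
    covar μ (fun ω => mdf μ V (V ω)) (fun ω => mdf μ V (V ω))

/-- Coefficient of monotone association `CMA(U,V) = (AGC(U,V) + 1) / 2`. -/
def cma (μ : Measure Ω) (U V : Ω → ℝ) : ℝ := (agc μ U V + 1) / 2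

/-- `X` is not almost surely constant. -/
def Nondeg (μ : Measure Ω) (X : Ω → ℝ) : Prop := ¬ ∃ c : ℝ, X =ᵐ[μ] fun _ => c

/-- Pearson correlation. -/
def pcor (μ : Measure Ω) (f g : Ω → ℝ) : ℝ :=
  covar μ f g / (Real.sqrt (covar μ f f) * Real.sqrt (covar μ g g))

/-- Quantile function (generalized inverse of the CDF). -/
def qf (μ : Measure Ω) (Y : Ω → ℝ) (α : ℝ) : ℝ :=
  sInf {y : ℝ | α ≤ (μ {ω | Y ω ≤ y}).toReal}

section Aux

lemma simFun_nonneg (a b : ℝ) : 0 ≤ simFun a b := by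
  unfold simFun; split_ifs <;> (try simp_all) <;> norm_num

lemma simFun_le_one (a b : ℝ) : simFun a b ≤ 1 := by
  unfold simFun; split_ifs <;> (try simp_all) <;> norm_num

lemma simFun_add (a b : ℝ) : simFun a b + simFun b a = 1 := by
  unfold simFun
  rcases lt_trichotomy a b with h|rfl|h
  · simp [h, ne_of_lt h, ne_of_gt h, lt_asymm h]
  · norm_num
  · simp [h, ne_of_lt h, ne_of_gt h, lt_asymm h]

lemma simFun_three (a b c : ℝ) :
    simFun a c * simFun b c + simFun a b * simFun c b + simFun b a * simFun c a =
      1 - (1/4) * (if a = b ∧ b = c then 1 else 0) := by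
  unfold simFun
  rcases lt_trichotomy a b with h|h|h <;> rcases lt_trichotomy b c with h1|h1|h1 <;>
    rcases lt_trichotomy a c with h2|h2|h2 <;> subst_vars <;>
    simp_all [lt_asymm, le_of_lt, ne_of_lt, ne_of_gt, lt_irrefl] <;> norm_num <;> linarith

lemma measurable_simFun {α : Type*} [MeasurableSpace α] {f g : α → ℝ}
    (hf : Measurable f) (hg : Measurable g) :
    Measurable fun a => simFun (f a) (g a) := by
  unfold simFun
  exact (Measurable.ite (measurableSet_lt hf hg) measurable_const measurable_const).add
    (measurable_const.mul
      (Measurable.ite (measurableSet_eq_fun hf hg) measurable_const measurable_const))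

lemma int01 {α : Type*} [MeasurableSpace α] (ν : Measure α) [IsFiniteMeasure ν]
    {f : α → ℝ} (hm : AEStronglyMeasurable f ν) (h0 : ∀ a, 0 ≤ f a) (h1 : ∀ a, f a ≤ 1) :
    Integrable f ν :=
  ⟨hm, HasFiniteIntegral.of_bounded (C := 1)
    (Filter.Eventually.of_forall fun a => abs_le.2 ⟨by linarith [h0 a], h1 a⟩)⟩

lemma ss_nonneg (a b c d : ℝ) : 0 ≤ simFun a b * simFun c d :=
  mul_nonneg (simFun_nonneg _ _) (simFun_nonneg _ _)

lemma ss_le_one (a b c d : ℝ) : simFun a b * simFun c d ≤ 1 := by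
  nlinarith [simFun_nonneg a b, simFun_nonneg c d, simFun_le_one a b, simFun_le_one c d]

variable (μ : Measure Ω) [IsProbabilityMeasure μ] {X : Ω → ℝ} (hX : Measurable X)

include hX in
lemma mdf_eq (x : ℝ) : mdf μ X x = ∫ a, simFun (X a) x ∂μ := by
  have h1 : (fun a => ((if X a < x then (1:ℝ) else 0))) =
      ({a | X a < x}).indicator (fun _ => (1:ℝ)) := by
    funext a; simp [Set.indicator_apply]
  have h2 : (fun a => ((if X a = x then (1:ℝ) else 0))) =
      ({a | X a = x}).indicator (fun _ => (1:ℝ)) := by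
    funext a; simp [Set.indicator_apply]
  have m1 : MeasurableSet {a | X a < x} := measurableSet_lt hX measurable_const
  have m2 : MeasurableSet {a | X a = x} := hX (measurableSet_singleton x)
  have i1 : Integrable (fun a => if X a < x then (1:ℝ) else 0) μ := by
    rw [h1]; exact (integrable_const 1).indicator m1
  have i2 : Integrable (fun a => (1/2 : ℝ) * (if X a = x then (1:ℝ) else 0)) μ := by
    refine Integrable.const_mul ?_ _
    rw [h2]; exact (integrable_const 1).indicator m2
  rw [show (fun a => simFun (X a) x) =
    (fun a => (if X a < x then (1:ℝ) else 0) + (1/2) * (if X a = x then 1 else 0)) from rfl]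
  rw [integral_add i1 i2, integral_const_mul, h1, h2,
    integral_indicator_const (1:ℝ) m1, integral_indicator_const (1:ℝ) m2]
  simp [mdf, Measure.real]

include hX in
lemma mdf_nonneg (x : ℝ) : 0 ≤ mdf μ X x := by
  rw [mdf_eq μ hX]
  exact integral_nonneg fun a => simFun_nonneg _ _

include hX in
lemma mdf_le_one (x : ℝ) : mdf μ X x ≤ 1 := by
  rw [mdf_eq μ hX]
  calc ∫ a, simFun (X a) x ∂μ ≤ ∫ _, (1:ℝ) ∂μ := by
        refine integral_mono (int01 μ ((measurable_simFun hX measurable_const).aestronglyMeasurable)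
          (fun a => simFun_nonneg _ _) (fun a => simFun_le_one _ _)) (integrable_const 1)
          fun a => simFun_le_one _ _
    _ = 1 := by simp

include hX in
lemma sm_mdf : StronglyMeasurable fun c => mdf μ X (X c) := by
  have : (fun c => mdf μ X (X c)) = fun c => ∫ a, simFun (X a) (X c) ∂μ := by
    funext c; exact mdf_eq μ hX (X c)
  rw [this]
  exact StronglyMeasurable.integral_prod_right'
    (f := fun p : Ω × Ω => simFun (X p.2) (X p.1))
    ((measurable_simFun (hX.comp measurable_snd) (hX.comp measurable_fst)).stronglyMeasurable)

include hX in
lemma int_mdf : ∫ c, mdf μ X (X c) ∂μ = 1/2 := by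
  have hfm : Measurable fun p : Ω × Ω => simFun (X p.1) (X p.2) :=
    measurable_simFun (hX.comp measurable_fst) (hX.comp measurable_snd)
  have hfm' : Measurable fun p : Ω × Ω => simFun (X p.2) (X p.1) :=
    measurable_simFun (hX.comp measurable_snd) (hX.comp measurable_fst)
  have hint : Integrable (fun p : Ω × Ω => simFun (X p.1) (X p.2)) (μ.prod μ) :=
    int01 _ hfm.aestronglyMeasurable (fun _ => simFun_nonneg _ _) (fun _ => simFun_le_one _ _)
  have hint' : Integrable (fun p : Ω × Ω => simFun (X p.2) (X p.1)) (μ.prod μ) :=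
    int01 _ hfm'.aestronglyMeasurable (fun _ => simFun_nonneg _ _) (fun _ => simFun_le_one _ _)
  have h1 : ∫ c, mdf μ X (X c) ∂μ = ∫ p, simFun (X p.2) (X p.1) ∂(μ.prod μ) := by
    simp_rw [mdf_eq μ hX]
    exact (integral_prod _ hint').symm
  have h2 : ∫ p, simFun (X p.2) (X p.1) ∂(μ.prod μ) =
      ∫ p, simFun (X p.1) (X p.2) ∂(μ.prod μ) :=
    integral_prod_swap (fun p : Ω × Ω => simFun (X p.1) (X p.2))
  have h3 : (∫ p, simFun (X p.1) (X p.2) ∂(μ.prod μ)) +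
      (∫ p, simFun (X p.2) (X p.1) ∂(μ.prod μ)) = 1 := by
    rw [← integral_add hint hint']
    simp_rw [simFun_add]
    simp
  rw [h1, h2]; linarith [h2, h3]

include hX in
lemma int_mdf_sq :
    ∫ c, mdf μ X (X c) * mdf μ X (X c) ∂μ = 1/3 - gran μ X / 12 := by
  set f : Ω → Ω → ℝ := fun a c => simFun (X a) (X c) with hf
  set m : Ω → ℝ := fun c => mdf μ X (X c) with hmdef
  have hmeq : ∀ c, m c = ∫ a, f a c ∂μ := fun c => mdf_eq μ hX (X c)
  have hm : Measurable m := (sm_mdf μ hX).measurable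
  have hm0 : ∀ c, 0 ≤ m c := fun c => mdf_nonneg μ hX (X c)
  have hm1 : ∀ c, m c ≤ 1 := fun c => mdf_le_one μ hX (X c)
  set T : Measure (Ω × Ω × Ω) := μ.prod (μ.prod μ) with hT
  -- measurability of compositions
  have msim : ∀ (u v : Ω × Ω × Ω → Ω), Measurable u → Measurable v →
      Measurable fun w => f (u w) (v w) := by
    intro u v hu hv
    exact measurable_simFun (hX.comp hu) (hX.comp hv)
  have msim2 : ∀ (u v : Ω × Ω → Ω), Measurable u → Measurable v →
      Measurable fun w => f (u w) (v w) := by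
    intro u v hu hv
    exact measurable_simFun (hX.comp hu) (hX.comp hv)
  have w1 : Measurable fun w : Ω × Ω × Ω => w.1 := measurable_fst
  have w2 : Measurable fun w : Ω × Ω × Ω => w.2.1 := measurable_fst.comp measurable_snd
  have w3 : Measurable fun w : Ω × Ω × Ω => w.2.2 := measurable_snd.comp measurable_snd
  -- integrabilities on the triple product
  have hint1 : Integrable (fun w : Ω × Ω × Ω => f w.1 w.2.2 * f w.2.1 w.2.2) T :=
    int01 _ ((msim (fun w : Ω × Ω × Ω => w.1) (fun w : Ω × Ω × Ω => w.2.2) w1 w3).mul (msim (fun w : Ω × Ω × Ω => w.2.1) (fun w : Ω × Ω × Ω => w.2.2) w2 w3)).aestronglyMeasurable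
      (fun _ => ss_nonneg _ _ _ _) (fun _ => ss_le_one _ _ _ _)
  have hint2 : Integrable (fun w : Ω × Ω × Ω => f w.1 w.2.1 * f w.2.2 w.2.1) T :=
    int01 _ ((msim (fun w : Ω × Ω × Ω => w.1) (fun w : Ω × Ω × Ω => w.2.1) w1 w2).mul (msim (fun w : Ω × Ω × Ω => w.2.2) (fun w : Ω × Ω × Ω => w.2.1) w3 w2)).aestronglyMeasurable
      (fun _ => ss_nonneg _ _ _ _) (fun _ => ss_le_one _ _ _ _)
  have hint3 : Integrable (fun w : Ω × Ω × Ω => f w.2.1 w.1 * f w.2.2 w.1) T :=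
    int01 _ ((msim (fun w : Ω × Ω × Ω => w.2.1) (fun w : Ω × Ω × Ω => w.1) w2 w1).mul (msim (fun w : Ω × Ω × Ω => w.2.2) (fun w : Ω × Ω × Ω => w.1) w3 w1)).aestronglyMeasurable
      (fun _ => ss_nonneg _ _ _ _) (fun _ => ss_le_one _ _ _ _)
  -- pairwise integrabilities
  have hintB : ∀ u, Integrable (fun p : Ω × Ω => f p.1 u * f p.2 u) (μ.prod μ) := fun u =>
    int01 _ ((msim2 (fun p : Ω × Ω => p.1) (fun _ => u) measurable_fst measurable_const).mul
      (msim2 (fun p : Ω × Ω => p.2) (fun _ => u) measurable_snd measurable_const)).aestronglyMeasurable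
      (fun _ => ss_nonneg _ _ _ _) (fun _ => ss_le_one _ _ _ _)
  have hintF : ∀ u, Integrable (fun p : Ω × Ω => f u p.1 * f p.2 p.1) (μ.prod μ) := fun u =>
    int01 _ ((msim2 (fun _ : Ω × Ω => u) (fun p : Ω × Ω => p.1) measurable_const measurable_fst).mul
      (msim2 (fun p : Ω × Ω => p.2) (fun p : Ω × Ω => p.1) measurable_snd measurable_fst)).aestronglyMeasurable
      (fun _ => ss_nonneg _ _ _ _) (fun _ => ss_le_one _ _ _ _)
  have hintD : ∀ u, Integrable (fun p : Ω × Ω => f u p.2 * f p.1 p.2) (μ.prod μ) := fun u =>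
    int01 _ ((msim2 (fun _ : Ω × Ω => u) (fun p : Ω × Ω => p.2) measurable_const measurable_snd).mul
      (msim2 (fun p : Ω × Ω => p.1) (fun p : Ω × Ω => p.2) measurable_fst measurable_snd)).aestronglyMeasurable
      (fun _ => ss_nonneg _ _ _ _) (fun _ => ss_le_one _ _ _ _)
  have hintC : Integrable (fun p : Ω × Ω => f p.1 p.2 * m p.2) (μ.prod μ) :=
    int01 _ ((msim2 (fun p : Ω × Ω => p.1) (fun p : Ω × Ω => p.2) measurable_fst measurable_snd).mul
      (hm.comp measurable_snd)).aestronglyMeasurable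
      (fun p => mul_nonneg (simFun_nonneg _ _) (hm0 _))
      (fun p => mul_le_one₀ (simFun_le_one _ _) (hm0 _) (hm1 _))
  set M : ℝ := ∫ c, m c * m c ∂μ with hM
  have claim3 : ∫ w, f w.2.1 w.1 * f w.2.2 w.1 ∂T = M := by
    rw [hT, integral_prod _ hint3]
    refine integral_congr_ae (Filter.Eventually.of_forall fun u => ?_)
    dsimp only
    rw [integral_prod _ (hintB u)]
    have h1 : ∀ v, ∫ t, f v u * f t u ∂μ = f v u * m u := fun v => by
      rw [integral_const_mul, ← hmeq]
    calc (∫ v, ∫ t, f v u * f t u ∂μ ∂μ) = ∫ v, f v u * m u ∂μ :=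
          integral_congr_ae (Filter.Eventually.of_forall h1)
      _ = (∫ v, f v u ∂μ) * m u := integral_mul_const _ _
      _ = m u * m u := by rw [← hmeq]
  have claim2 : ∫ w, f w.1 w.2.1 * f w.2.2 w.2.1 ∂T = M := by
    rw [hT, integral_prod _ hint2]
    have inner : ∀ u, (∫ p : Ω × Ω, f u p.1 * f p.2 p.1 ∂(μ.prod μ)) =
        ∫ v, f u v * m v ∂μ := by
      intro u
      rw [integral_prod _ (hintF u)]
      refine integral_congr_ae (Filter.Eventually.of_forall fun v => ?_)
      dsimp only
      rw [integral_const_mul, ← hmeq]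
    calc (∫ u, ∫ p : Ω × Ω, f u p.1 * f p.2 p.1 ∂(μ.prod μ) ∂μ)
        = ∫ u, ∫ v, f u v * m v ∂μ ∂μ :=
          integral_congr_ae (Filter.Eventually.of_forall inner)
      _ = ∫ v, ∫ u, f u v * m v ∂μ ∂μ := integral_integral_swap hintC
      _ = ∫ v, m v * m v ∂μ := by
          refine integral_congr_ae (Filter.Eventually.of_forall fun v => ?_)
          dsimp only
          rw [integral_mul_const, ← hmeq]
  have claim1 : ∫ w, f w.1 w.2.2 * f w.2.1 w.2.2 ∂T = M := by
    rw [hT, integral_prod _ hint1]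
    have inner : ∀ u, (∫ p : Ω × Ω, f u p.2 * f p.1 p.2 ∂(μ.prod μ)) =
        ∫ t, f u t * m t ∂μ := by
      intro u
      rw [integral_prod _ (hintD u)]
      dsimp only
      have hswap : Integrable (Function.uncurry fun v t => f u t * f v t) (μ.prod μ) :=
        int01 _ ((msim2 (fun _ : Ω × Ω => u) (fun p : Ω × Ω => p.2) measurable_const measurable_snd).mul
          (msim2 (fun p : Ω × Ω => p.1) (fun p : Ω × Ω => p.2) measurable_fst measurable_snd)).aestronglyMeasurable
          (fun _ => ss_nonneg _ _ _ _) (fun _ => ss_le_one _ _ _ _)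
      calc (∫ v, ∫ t, f u t * f v t ∂μ ∂μ) = ∫ t, ∫ v, f u t * f v t ∂μ ∂μ :=
            integral_integral_swap hswap
        _ = ∫ t, f u t * m t ∂μ := by
            refine integral_congr_ae (Filter.Eventually.of_forall fun t => ?_)
            dsimp only
            rw [integral_const_mul, ← hmeq]
    calc (∫ u, ∫ p : Ω × Ω, f u p.2 * f p.1 p.2 ∂(μ.prod μ) ∂μ)
        = ∫ u, ∫ t, f u t * m t ∂μ ∂μ :=
          integral_congr_ae (Filter.Eventually.of_forall inner)
      _ = ∫ t, ∫ u, f u t * m t ∂μ ∂μ := integral_integral_swap hintC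
      _ = ∫ t, m t * m t ∂μ := by
          refine integral_congr_ae (Filter.Eventually.of_forall fun t => ?_)
          dsimp only
          rw [integral_mul_const, ← hmeq]
  -- the sum identity
  have hS3 : MeasurableSet {w : Ω × Ω × Ω | X w.1 = X w.2.1 ∧ X w.2.1 = X w.2.2} :=
    (measurableSet_eq_fun (hX.comp w1) (hX.comp w2)).inter
      (measurableSet_eq_fun (hX.comp w2) (hX.comp w3))
  have hsum : (∫ w, f w.1 w.2.2 * f w.2.1 w.2.2 ∂T) + (∫ w, f w.1 w.2.1 * f w.2.2 w.2.1 ∂T)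
      + (∫ w, f w.2.1 w.1 * f w.2.2 w.1 ∂T) = 1 - gran μ X / 4 := by
    have hptw : ∀ w : Ω × Ω × Ω, f w.1 w.2.2 * f w.2.1 w.2.2 +
        f w.1 w.2.1 * f w.2.2 w.2.1 + f w.2.1 w.1 * f w.2.2 w.1 =
        1 - (1/4) * ({w : Ω × Ω × Ω | X w.1 = X w.2.1 ∧ X w.2.1 = X w.2.2}).indicator
          (fun _ => (1:ℝ)) w := by
      intro w
      rw [Set.indicator_apply]
      simpa [hf, Set.mem_setOf_eq] using simFun_three (X w.1) (X w.2.1) (X w.2.2)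
    have hind : Integrable (({w : Ω × Ω × Ω | X w.1 = X w.2.1 ∧ X w.2.1 = X w.2.2}).indicator
        (fun _ => (1:ℝ))) T := (integrable_const 1).indicator hS3
    have hintsum : Integrable (fun w : Ω × Ω × Ω => f w.1 w.2.2 * f w.2.1 w.2.2 +
        f w.1 w.2.1 * f w.2.2 w.2.1) T := hint1.add hint2
    calc (∫ w, f w.1 w.2.2 * f w.2.1 w.2.2 ∂T) + (∫ w, f w.1 w.2.1 * f w.2.2 w.2.1 ∂T)
          + (∫ w, f w.2.1 w.1 * f w.2.2 w.1 ∂T)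
        = ∫ w, (f w.1 w.2.2 * f w.2.1 w.2.2 + f w.1 w.2.1 * f w.2.2 w.2.1)
            + f w.2.1 w.1 * f w.2.2 w.1 ∂T := by
          rw [integral_add hintsum hint3, integral_add hint1 hint2]
      _ = ∫ w, 1 - (1/4) * ({w : Ω × Ω × Ω | X w.1 = X w.2.1 ∧ X w.2.1 = X w.2.2}).indicator
            (fun _ => (1:ℝ)) w ∂T := by
          refine integral_congr_ae (Filter.Eventually.of_forall fun w => ?_)
          exact hptw w
      _ = 1 - gran μ X / 4 := by
          rw [integral_sub (integrable_const 1) (hind.const_mul _), integral_const_mul,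
            integral_indicator_const (1:ℝ) hS3, integral_const]
          simp only [gran, hT, Measure.real, measure_univ, ENNReal.toReal_one, smul_eq_mul, mul_one]
          ring
  have := claim1; have := claim2; have := claim3
  show M = 1/3 - gran μ X / 12
  linarith [hsum, claim1, claim2, claim3]

include hX in
lemma covar_mdf_self :
    covar μ (fun ω => mdf μ X (X ω)) (fun ω => mdf μ X (X ω)) = (1 - gran μ X) / 12 := by
  unfold covar
  rw [int_mdf μ hX, int_mdf_sq μ hX]
  ring

lemma gran_nonneg : 0 ≤ gran μ X := ENNReal.toReal_nonneg

lemma gran_le_one : gran μ X ≤ 1 := by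
  unfold gran
  have h : (μ.prod (μ.prod μ)) {ω : Ω × Ω × Ω | X ω.1 = X ω.2.1 ∧ X ω.2.1 = X ω.2.2} ≤ 1 :=
    prob_le_one
  simpa using ENNReal.toReal_mono (by norm_num) h

include hX in
lemma gran_lt_one (hXnd : Nondeg μ X) : gran μ X < 1 := by
  rcases lt_or_eq_of_le (gran_le_one μ (X := X)) with h | h
  · exact h
  exfalso
  apply hXnd
  -- from gran = 1 we get that X is a.s. constant
  have w1 : Measurable fun w : Ω × Ω × Ω => w.1 := measurable_fst
  have w2 : Measurable fun w : Ω × Ω × Ω => w.2.1 := measurable_fst.comp measurable_snd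
  have hS3 : MeasurableSet {w : Ω × Ω × Ω | X w.1 = X w.2.1 ∧ X w.2.1 = X w.2.2} :=
    (measurableSet_eq_fun (hX.comp w1) (hX.comp w2)).inter
      (measurableSet_eq_fun (hX.comp w2) (hX.comp (measurable_snd.comp measurable_snd)))
  have h1 : (μ.prod (μ.prod μ)) {ω : Ω × Ω × Ω | X ω.1 = X ω.2.1 ∧ X ω.2.1 = X ω.2.2} = 1 := by
    unfold gran at h
    exact (ENNReal.toReal_eq_one_iff _).mp h
  -- project to the first two coordinates
  have hD : MeasurableSet {p : Ω × Ω | X p.1 = X p.2} :=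
    measurableSet_eq_fun (hX.comp measurable_fst) (hX.comp measurable_snd)
  have hπ : Measurable fun w : Ω × Ω × Ω => (w.1, w.2.1) :=
    measurable_fst.prodMk (measurable_fst.comp measurable_snd)
  have hmap : (μ.prod (μ.prod μ)).map (fun w : Ω × Ω × Ω => (w.1, w.2.1)) = μ.prod μ := by
    have h2 : (fun w : Ω × Ω × Ω => (w.1, w.2.1)) = Prod.map (id : Ω → Ω) Prod.fst := rfl
    rw [h2, ← Measure.map_prod_map μ (μ.prod μ) measurable_id measurable_fst,
      Measure.map_id]
    congr 1
    exact Measure.fst_prod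
  have h2 : (μ.prod μ) {p : Ω × Ω | X p.1 = X p.2} = 1 := by
    have hsub : {ω : Ω × Ω × Ω | X ω.1 = X ω.2.1 ∧ X ω.2.1 = X ω.2.2} ⊆
        (fun w : Ω × Ω × Ω => (w.1, w.2.1)) ⁻¹' {p : Ω × Ω | X p.1 = X p.2} := by
      intro w hw; exact hw.1
    have hle : (1 : ENNReal) ≤ (μ.prod μ) {p : Ω × Ω | X p.1 = X p.2} := by
      rw [← hmap, Measure.map_apply hπ hD]
      exact h1 ▸ measure_mono hsub
    exact le_antisymm prob_le_one hle
  -- conclude a.e. constancy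
  have h3 : ∫⁻ a, μ {b | X a = X b} ∂μ = 1 := by
    have hpa := Measure.prod_apply (μ := μ) (ν := μ) hD
    rw [h2] at hpa
    exact hpa.symm
  have hFm : Measurable fun a => μ (Prod.mk a ⁻¹' {p : Ω × Ω | X p.1 = X p.2}) :=
    measurable_measure_prodMk_left hD
  have hFm' : Measurable fun a => μ {b | X a = X b} := by
    simpa [Set.preimage, Set.mem_setOf_eq] using hFm
  have hle1 : ∀ a, μ {b | X a = X b} ≤ 1 := fun a => prob_le_one
  have hzero : ∫⁻ a, (1 - μ {b | X a = X b}) ∂μ = 0 := by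
    rw [lintegral_sub hFm' (by rw [h3]; norm_num)
      (Filter.Eventually.of_forall hle1), h3]
    simp
  have hae : ∀ᵐ a ∂μ, (1 : ENNReal) - μ {b | X a = X b} = 0 := by
    have := (lintegral_eq_zero_iff (measurable_const.sub hFm')).mp hzero
    filter_upwards [this] with a ha
    simpa using ha
  have hae' : ∀ᵐ a ∂μ, μ {b | X a = X b} = 1 := by
    filter_upwards [hae] with a ha
    have : (1 : ENNReal) ≤ μ {b | X a = X b} := tsub_eq_zero_iff_le.mp ha
    exact le_antisymm (hle1 a) this
  obtain ⟨a, ha⟩ := hae'.exists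
  refine ⟨X a, ?_⟩
  have hset : MeasurableSet {b | X b = X a} := hX (measurableSet_singleton (X a))
  have : μ {b | X b = X a} = 1 := by
    have : {b | X a = X b} = {b | X b = X a} := by ext b; exact eq_comm
    rwa [this] at ha
  have hcompl : μ {b | X b = X a}ᶜ = 0 := (prob_compl_eq_zero_iff hset).mpr this
  exact hcompl

lemma covar_comm (ν : Measure Ω) (f g : Ω → ℝ) : covar ν f g = covar ν g f := by
  unfold covar
  simp_rw [mul_comm (f _) (g _)]
  ring

end Aux

/-- provided `AGC(X,Y) ≠ 0`, symmetry `AGC(X,Y) = AGC(Y,X)` holds iff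
`γ(X) = γ(Y)`; in general `AGC(X,Y) = cor(F̄(X), Ḡ(Y)) √((1 − γ(X)) / (1 − γ(Y)))`. -/
theorem stmt_14 (μ : Measure Ω) [IsProbabilityMeasure μ] (X Y : Ω → ℝ)
    (hX : Measurable X) (hY : Measurable Y) (hXnd : Nondeg μ X) (hYnd : Nondeg μ Y) :
    (agc μ X Y ≠ 0 → (agc μ X Y = agc μ Y X ↔ gran μ X = gran μ Y)) ∧
    agc μ X Y = pcor μ (fun ω => mdf μ X (X ω)) (fun ω => mdf μ Y (Y ω)) *
      Real.sqrt ((1 - gran μ X) / (1 - gran μ Y)) := by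
  have hVX : covar μ (fun ω => mdf μ X (X ω)) (fun ω => mdf μ X (X ω)) = (1 - gran μ X) / 12 :=
    covar_mdf_self μ hX
  have hVY : covar μ (fun ω => mdf μ Y (Y ω)) (fun ω => mdf μ Y (Y ω)) = (1 - gran μ Y) / 12 :=
    covar_mdf_self μ hY
  have hgX : gran μ X < 1 := gran_lt_one μ hX hXnd
  have hgY : gran μ Y < 1 := gran_lt_one μ hY hYnd
  have ha : (0:ℝ) < 1 - gran μ X := by linarith
  have hb : (0:ℝ) < 1 - gran μ Y := by linarith
  have hVXpos : (0:ℝ) < (1 - gran μ X) / 12 := by positivity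
  have hVYpos : (0:ℝ) < (1 - gran μ Y) / 12 := by positivity
  have hcomm : covar μ (fun ω => mdf μ Y (Y ω)) (fun ω => mdf μ X (X ω)) =
      covar μ (fun ω => mdf μ X (X ω)) (fun ω => mdf μ Y (Y ω)) := covar_comm μ _ _
  constructor
  · intro hne
    have hcov : covar μ (fun ω => mdf μ X (X ω)) (fun ω => mdf μ Y (Y ω)) ≠ 0 := by
      intro h0
      apply hne
      unfold agc
      rw [h0, zero_div]
    constructor
    · intro heq
      unfold agc at heq
      rw [hcomm, hVX, hVY] at heq
      have h12 := (div_eq_div_iff hVYpos.ne' hVXpos.ne').mp heq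
      have := mul_left_cancel₀ hcov h12
      linarith
    · intro hg
      unfold agc
      rw [hcomm, hVX, hVY, hg]
  · unfold agc pcor
    rw [hVX, hVY]
    set cov := covar μ (fun ω => mdf μ X (X ω)) (fun ω => mdf μ Y (Y ω)) with hcov
    set a := 1 - gran μ X with hadef
    set b := 1 - gran μ Y with hbdef
    have sa : Real.sqrt a * Real.sqrt a = a := Real.mul_self_sqrt ha.le
    have sb : Real.sqrt b * Real.sqrt b = b := Real.mul_self_sqrt hb.le
    have s12 : Real.sqrt 12 * Real.sqrt 12 = 12 := Real.mul_self_sqrt (by norm_num)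
    have hsa : Real.sqrt a ≠ 0 := ne_of_gt (Real.sqrt_pos.mpr ha)
    have hsb : Real.sqrt b ≠ 0 := ne_of_gt (Real.sqrt_pos.mpr hb)
    have hs12 : Real.sqrt 12 ≠ 0 := ne_of_gt (Real.sqrt_pos.mpr (by norm_num))
    rw [Real.sqrt_div ha.le 12, Real.sqrt_div hb.le 12, Real.sqrt_div ha.le b]
    field_simp
    rw [sq, sq, sb, s12]
    ring

end
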